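/- χ^{1,p'}_{a,b,b±1}(L) = q^{-(1/4)(L ± (a-b))} · x^{p'}_L(a,b,b±1), relating the slanted-coordinate path generating function to the regime-II (parafermion) generating function. -/

import Mathlib

open Finset

namespace Melzer

/-- Height of the path after `i` steps, starting at `a`; `true` = NE step (+1),
`false` = SE step (-1). -/
def ht (a : ℤ) {L : ℕ} (s : Fin L → Bool) (i : ℕ) : ℤ :=
  a + ∑ j ∈ Finset.range i, (if h : j < L then (if s ⟨j, h⟩ then 1 else -1) else 0)

/-- `s` encodes a path in `P^{p'}_{a,b}(L)`: all heights lie in `[1, p'-1]` and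
the path ends at `b`. -/
def isPath (p' : ℕ) (a b : ℤ) {L : ℕ} (s : Fin L → Bool) : Prop :=
  (∀ i ∈ Finset.range (L + 1), 1 ≤ ht a s i ∧ ht a s i ≤ (p' : ℤ) - 1) ∧ ht a s L = b

instance decIsPath (p' : ℕ) (a b : ℤ) {L : ℕ} (s : Fin L → Bool) :
    Decidable (isPath p' a b s) := by
  unfold isPath; infer_instance

/-- Heights including the extra point `h_{L+1} = c`. -/
def htc (a : ℤ) {L : ℕ} (s : Fin L → Bool) (c : ℤ) (i : ℕ) : ℤ :=
  if i ≤ L then ht a s i else c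

/-- Regime-III weight: `i/2` at each straight vertex, `0` at peaks. -/
def wtIII (a : ℤ) {L : ℕ} (s : Fin L → Bool) (c : ℤ) : ℚ :=
  ∑ i ∈ Finset.Icc 1 L, if htc a s c (i + 1) = htc a s c (i - 1) then 0 else (i : ℚ) / 2

/-- Regime-II weight: `i/2` at each peak vertex, `0` at straight vertices. -/
def wtII (a : ℤ) {L : ℕ} (s : Fin L → Bool) (c : ℤ) : ℚ :=
  ∑ i ∈ Finset.Icc 1 L, if htc a s c (i + 1) = htc a s c (i - 1) then (i : ℚ) / 2 else 0

/-- Slanted-coordinate weight: at a peak-down vertex the contribution is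
`x = (i - (h_i - a))/2`, at a peak-up vertex it is `y = (i + (h_i - a))/2`. -/
def wtSl (a : ℤ) {L : ℕ} (s : Fin L → Bool) (c : ℤ) : ℚ :=
  ∑ i ∈ Finset.Icc 1 L,
    if htc a s c (i + 1) = htc a s c (i - 1) then
      (if htc a s c (i - 1) < htc a s c i then ((i : ℚ) - ((ht a s i - a : ℤ) : ℚ)) / 2
       else ((i : ℚ) + ((ht a s i - a : ℤ) : ℚ)) / 2)
    else 0

/-- `X^{p'}_L(a,b,c;q)`, the ABF (regime-III) finitised generating function. -/
noncomputable def X (p' : ℕ) (a b c : ℤ) (L : ℕ) (q : ℝ) : ℝ :=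
  ∑ s ∈ Finset.univ.filter (fun s : Fin L → Bool => isPath p' a b s),
    q ^ ((wtIII a s c : ℚ) : ℝ)

/-- `x^{p'}_L(a,b,c;q)`, the parafermion (regime-II) finitised generating function. -/
noncomputable def xPara (p' : ℕ) (a b c : ℤ) (L : ℕ) (q : ℝ) : ℝ :=
  ∑ s ∈ Finset.univ.filter (fun s : Fin L → Bool => isPath p' a b s),
    q ^ ((wtII a s c : ℚ) : ℝ)

/-- `χ^{1,p'}_{a,b,c}(L;q)`, generating function for the slanted-coordinate weight. -/
noncomputable def chiP (p' : ℕ) (a b c : ℤ) (L : ℕ) (q : ℝ) : ℝ :=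
  ∑ s ∈ Finset.univ.filter (fun s : Fin L → Bool => isPath p' a b s),
    q ^ ((wtSl a s c : ℚ) : ℝ)

/-- `χ^{p'-1,p'}_{a,b,c}(L;q) = q^{(1/4)(a-b)(a-c)} X^{p'}_L(a,b,c;q)`. -/
noncomputable def chiABF (p' : ℕ) (a b c : ℤ) (L : ℕ) (q : ℝ) : ℝ :=
  q ^ ((((a - b) * (a - c) : ℤ) : ℝ) / 4) * X p' a b c L q

/-- Extended direction sequence: index `0` is the pre-segment (NE iff `e = 1`),
indices `1..L` are the path segments, index `L+1` is the post-segment (NE iff `f = 0`). -/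
def dirsExt {L : ℕ} (s : Fin L → Bool) (e f : ℕ) (i : ℕ) : Bool :=
  if i = 0 then e == 1
  else if h : i - 1 < L then s ⟨i - 1, h⟩
  else f == 0

def runsAux : Bool → ℕ → List Bool → List ℕ
  | _, n, [] => [n]
  | d, n, x :: xs => if x = d then runsAux d (n + 1) xs else n :: runsAux x 1 xs

/-- Run lengths of a list of directions. -/
def runLengths : List Bool → List ℕ
  | [] => []
  | x :: xs => runsAux x 1 xs

/-- The `(e,f)`-striking sequence `(w_1, …, w_l)` of the path `s`. -/
def strike {L : ℕ} (s : Fin L → Bool) (e f : ℕ) : List ℕ :=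
  let r := runLengths (List.ofFn fun i : Fin (L + 2) => dirsExt s e f (i : ℕ))
  r.mapIdx fun i x => x - (if i = 0 then 1 else 0) - (if i = r.length - 1 then 1 else 0)

/-- `m^{(e,f)}(h) = L - l + 2` where `l` is the length of the striking sequence. -/
def mEF {L : ℕ} (s : Fin L → Bool) (e f : ℕ) : ℤ :=
  (L : ℤ) + 2 - (strike s e f).length

/-- The striking-sequence weight
`wt^{(e,f)}(h) = ∑_{i=2}^{l-1} (w_{i-1} + w_{i-3} + ⋯ + w_{1 + (i mod 2)})`. -/
def wtEF {L : ℕ} (s : Fin L → Bool) (e f : ℕ) : ℕ :=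
  ∑ i ∈ Finset.Icc 2 ((strike s e f).length - 1), ∑ j ∈ Finset.Icc 1 (i - 1),
    if j % 2 = (i - 1) % 2 then (strike s e f).getD (j - 1) 0 else 0

/-- `χ^{1,p'}_{a,b,e,f}(L,m;q)`, the restricted generating function. -/
noncomputable def chiRes (p' : ℕ) (a b : ℤ) (e f : ℕ) (L : ℕ) (m : ℤ) (q : ℝ) : ℝ :=
  ∑ s ∈ Finset.univ.filter
      (fun s : Fin L → Bool => isPath p' a b s ∧ mEF s e f = m),
    q ^ ((wtEF s e f : ℕ) : ℝ)

/-- The Gaussian (q-binomial) polynomial, via the Pascal recurrence. -/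
noncomputable def qbinom (q : ℝ) : ℕ → ℕ → ℝ
  | _, 0 => 1
  | 0, _ + 1 => 0
  | A + 1, B + 1 => qbinom q A B + q ^ (B + 1) * qbinom q A (B + 1)

/-- The `B`-transform on striking sequences:
`(w_1, w_2, …, w_{l-1}, w_l) ↦ (w_1, w_2+1, …, w_{l-1}+1, w_l)`. -/
def btransSeq (ws : List ℕ) : List ℕ :=
  ws.mapIdx fun i x => if i = 0 ∨ i = ws.length - 1 then x else x + 1

/-- Particle insertion on striking sequences:
`(w_1, w_2, …, w_l) ↦ (0, 1, w_1+1, w_2, …, w_l)`. -/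
def insertP : List ℕ → List ℕ
  | [] => []
  | w :: rest => 0 :: 1 :: (w + 1) :: rest

/-- A single particle move: in the extended direction sequence a window
`(x, !x, x, x)` (two scoring vertices followed by a non-scoring one) is replaced
by `(x, x, !x, x)` (a non-scoring vertex followed by two scoring ones). -/
def moveRel {L : ℕ} (e f : ℕ) (s s' : Fin L → Bool) : Prop :=
  ∃ j, j + 3 ≤ L + 1 ∧
    (∀ i, i ≠ j + 1 → i ≠ j + 2 → dirsExt s e f i = dirsExt s' e f i) ∧
    dirsExt s e f (j + 1) = !(dirsExt s e f j) ∧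
    dirsExt s e f (j + 2) = dirsExt s e f j ∧
    dirsExt s e f (j + 3) = dirsExt s e f j ∧
    dirsExt s' e f (j + 1) = dirsExt s e f j ∧
    dirsExt s' e f (j + 2) = !(dirsExt s e f j)

lemma ht_succ (a : ℤ) {L : ℕ} (s : Fin L → Bool) (k : ℕ) :
    ht a s (k + 1) = ht a s k + (if h : k < L then (if s ⟨k, h⟩ then 1 else -1) else 0) := by
  unfold ht
  rw [Finset.sum_range_succ]
  ring

lemma ht_zero (a : ℤ) {L : ℕ} (s : Fin L → Bool) : ht a s 0 = a := by
  simp [ht]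

lemma htc_step (a : ℤ) {L : ℕ} (s : Fin L → Bool) (b c ε : ℤ)
    (hb : ht a s L = b) (hc : c = b + ε) (hε : ε = 1 ∨ ε = -1) :
    ∀ i, 1 ≤ i → i ≤ L + 1 →
      htc a s c i - htc a s c (i - 1) = 1 ∨ htc a s c i - htc a s c (i - 1) = -1 := by
  intro i h1 h2
  obtain ⟨k, rfl⟩ : ∃ k, i = k + 1 := ⟨i - 1, by omega⟩
  rcases Nat.lt_or_ge (k + 1) (L + 1) with hlt | hge
  · have hk : k < L := by omega
    have e1 : htc a s c (k + 1) = ht a s (k + 1) := by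
      simp only [htc]; rw [if_pos (by omega)]
    have e2 : htc a s c (k + 1 - 1) = ht a s k := by
      simp only [htc, Nat.add_sub_cancel]; rw [if_pos (by omega)]
    rw [e1, e2, ht_succ, dif_pos hk]
    cases hv : s ⟨k, hk⟩ <;> simp [hv] <;> omega
  · have hkL : k = L := by omega
    have e1 : htc a s c (k + 1) = c := by
      simp only [htc]; rw [if_neg (by omega)]
    have e2 : htc a s c (k + 1 - 1) = b := by
      simp only [htc, Nat.add_sub_cancel]; rw [if_pos (by omega)]
      rw [hkL]; exact hb
    rw [e1, e2, hc]
    omega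

lemma wt_diff (a : ℤ) {L : ℕ} (s : Fin L → Bool) (b c ε : ℤ)
    (hb : ht a s L = b) (hc : c = b + ε) (hε : ε = 1 ∨ ε = -1) :
    wtSl a s c = wtII a s c + ((ε : ℚ) * ((b : ℚ) - (a : ℚ)) - (L : ℚ)) / 4 := by
  classical
  set D : ℕ → ℚ := fun i => ((htc a s c i - htc a s c (i - 1) : ℤ) : ℚ) with hD
  set V : ℕ → ℚ := fun i => ((htc a s c i - a : ℤ) : ℚ) with hV
  have hstep := htc_step a s b c ε hb hc hε
  have hDpm : ∀ i, 1 ≤ i → i ≤ L + 1 → D i = 1 ∨ D i = -1 := by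
    intro i h1 h2
    rcases hstep i h1 h2 with h | h
    · left; simp only [hD]; rw [h]; norm_num
    · right; simp only [hD]; rw [h]; norm_num
  have key : ∀ i ∈ Finset.Icc 1 L,
      (if htc a s c (i + 1) = htc a s c (i - 1) then
        (if htc a s c (i - 1) < htc a s c i then ((i : ℚ) - ((ht a s i - a : ℤ) : ℚ)) / 2
         else ((i : ℚ) + ((ht a s i - a : ℤ) : ℚ)) / 2)
       else 0)
      = (if htc a s c (i + 1) = htc a s c (i - 1) then (i : ℚ) / 2 else 0)
        + (D (i + 1) - D i) * V i / 4 := by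
    intro i hi
    simp only [Finset.mem_Icc] at hi
    have hsI := hstep i hi.1 (by omega)
    have hsI1 := hstep (i + 1) (by omega) (by omega)
    rw [Nat.add_sub_cancel] at hsI1
    have hVi : V i = ((ht a s i - a : ℤ) : ℚ) := by
      simp only [hV, htc]; rw [if_pos hi.2]
    have hDi : D i = ((htc a s c i - htc a s c (i - 1) : ℤ) : ℚ) := rfl
    have hDi1 : D (i + 1) = ((htc a s c (i + 1) - htc a s c i : ℤ) : ℚ) := by
      simp only [hD, Nat.add_sub_cancel]
    by_cases hpk : htc a s c (i + 1) = htc a s c (i - 1)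
    · rw [if_pos hpk, if_pos hpk]
      by_cases hup : htc a s c (i - 1) < htc a s c i
      · rw [if_pos hup]
        have h1 : htc a s c i - htc a s c (i - 1) = 1 := by
          rcases hsI with h | h
          · exact h
          · omega
        have h2 : htc a s c (i + 1) - htc a s c i = -1 := by omega
        rw [hDi1, hDi, h1, h2, hVi]
        push_cast
        ring
      · rw [if_neg hup]
        have h1 : htc a s c i - htc a s c (i - 1) = -1 := by
          rcases hsI with h | h
          · omega
          · exact h
        have h2 : htc a s c (i + 1) - htc a s c i = 1 := by omega
        rw [hDi1, hDi, h1, h2, hVi]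
        push_cast
        ring
    · rw [if_neg hpk, if_neg hpk]
      have heq : htc a s c (i + 1) - htc a s c i = htc a s c i - htc a s c (i - 1) := by
        rcases hsI with h | h <;> rcases hsI1 with h' | h' <;> omega
      rw [hDi1, hDi, heq]
      ring
  have hVD : ∀ j : ℕ, 1 ≤ j → V j - V (j - 1) = D j := by
    intro j hj
    simp only [hV, hD]
    push_cast
    ring
  have tele : ∑ i ∈ Finset.Icc 1 L, (D (i + 1) - D i) * V i
      = (ε : ℚ) * ((b : ℚ) - (a : ℚ)) - (L : ℚ) := by
    rw [← Finset.Ico_add_one_right_eq_Icc, Finset.sum_Ico_eq_sum_range]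
    simp only [Nat.add_sub_cancel]
    have hGstep : ∀ i ∈ Finset.range L,
        (D (1 + i + 1) - D (1 + i)) * V (1 + i)
          = ((fun j => D (j + 1) * V (j + 1)) (i + 1)
              - (fun j => D (j + 1) * V (j + 1)) i) - 1 := by
      intro i hi
      simp only [Finset.mem_range] at hi
      have hVd : V (i + 2) - V (i + 1) = D (i + 2) := by
        have := hVD (i + 2) (by omega)
        simpa using this
      have hsq : D (i + 2) * D (i + 2) = 1 := by
        rcases hDpm (i + 2) (by omega) (by omega) with h | h <;> rw [h] <;> norm_num
      rw [show 1 + i + 1 = i + 2 by omega, show 1 + i = i + 1 by omega]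
      have h2 : i + 1 + 1 = i + 2 := by omega
      rw [h2]
      linear_combination (-(D (i + 2))) * hVd - hsq
    rw [Finset.sum_congr rfl hGstep, Finset.sum_sub_distrib,
      Finset.sum_range_sub (fun j => D (j + 1) * V (j + 1)), Finset.sum_const]
    have hHL1 : htc a s c (L + 1) = c := by
      simp only [htc]; rw [if_neg (by omega)]
    have hHL : htc a s c L = b := by
      simp only [htc]; rw [if_pos le_rfl]; exact hb
    have hH0 : htc a s c 0 = a := by
      simp only [htc]; rw [if_pos (by omega)]; exact ht_zero a s
    have hfL : D (L + 1) * V (L + 1) = (ε : ℚ) * ((b : ℚ) - (a : ℚ)) + 1 := by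
      simp only [hD, hV, Nat.add_sub_cancel]
      rw [hHL1, hHL, hc]
      push_cast
      rcases hε with h | h <;> rw [h] <;> ring
    have hf0 : D 1 * V 1 = 1 := by
      have hV1 : V 1 = D 1 := by
        simp only [hV, hD]
        norm_num [hH0]
      rw [hV1]
      rcases hDpm 1 le_rfl (by omega) with h | h <;> rw [h] <;> norm_num
    simp only [hfL, hf0, nsmul_eq_mul, Finset.card_range]
    ring
  unfold wtSl wtII
  rw [Finset.sum_congr rfl key, Finset.sum_add_distrib, ← Finset.sum_div, tele]

/-- `χ^{1,p'}_{a,b,b±1}(L) = q^{-(1/4)(L ± (a-b))} · x^{p'}_L(a,b,b±1)`. -/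
theorem statement4 (p' L : ℕ) (a b c ε : ℤ)
    (ha : 1 ≤ a ∧ a < (p' : ℤ)) (hb : 1 ≤ b ∧ b < (p' : ℤ))
    (hε : ε = 1 ∨ ε = -1) (hc : c = b + ε)
    (q : ℝ) (hq : 0 < q) :
    chiP p' a b c L q
      = q ^ (-(((L : ℝ) + (ε : ℝ) * ((a - b : ℤ) : ℝ)) / 4)) * xPara p' a b c L q := by
  unfold chiP xPara
  rw [Finset.mul_sum]
  apply Finset.sum_congr rfl
  intro s hs
  simp only [Finset.mem_filter] at hs
  have hb' : ht a s L = b := hs.2.2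
  have hw := wt_diff a s b c ε hb' hc hε
  have hexp : ((wtSl a s c : ℚ) : ℝ)
      = (-(((L : ℝ) + (ε : ℝ) * ((a - b : ℤ) : ℝ)) / 4)) + ((wtII a s c : ℚ) : ℝ) := by
    rw [hw]
    push_cast
    ring
  rw [hexp, Real.rpow_add hq]

end Melzer
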